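/- arXiv:1807.06516 — 4 statements merged into one kernel-verified Lean document; each statement's English description precedes it below -/
import Mathlib

section
/- Let M be a matroid on a finite linearly ordered ground set E and let B be a basis of M. Let F be the external part of B, i.e., the unique subset of E such that B ∩ F is a basis of M(F), Int_{M(F)}(B ∩ F) = ∅, Ext_{M(F)}(B ∩ F) = Ext_M(B), Int_{M/F}(B \ F) = Int_M(B), and Ext_{M/F}(B \ F) = ∅. Then F is the unique subset of E satisfying the following two recursive conditions: for every e ∈ B, e ∈ F if and only if there exists c ∈ C*(B;e) with c < e and c ∈ F; and for every e ∈ E \ B, e ∈ F if and only if every c ∈ C(B;e) with c < e satisfies c ∈ F. -/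
open Matroid Set

namespace ActiveBij

variable {α : Type*}

/-- Deletion of a set of elements from a matroid. -/
def del (M : Matroid α) (D : Set α) : Matroid α := M ↾ (M.E \ D)

/-- Contraction of a set of elements of a matroid. -/
def con (M : Matroid α) (C : Set α) : Matroid α := (del M✶ C)✶

/-- The minor `M(G)/F` : restriction to `G` followed by contraction of `F`. -/
def minor (M : Matroid α) (G F : Set α) : Matroid α := con (M ↾ G) F

/-- A circuit of a matroid : a minimal dependent set. -/
def Cct (M : Matroid α) (C : Set α) : Prop := Minimal M.Dep C

/-- A cocircuit of a matroid : a circuit of the dual. -/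
def Cocct (M : Matroid α) (C : Set α) : Prop := Cct M✶ C

/-- The fundamental circuit of `e ∉ B` with respect to a base `B` :
the unique circuit contained in `B ∪ {e}`. -/
def fundCct (M : Matroid α) (B : Set α) (e : α) : Set α :=
  ⋂₀ {C | Cct M C ∧ C ⊆ insert e B}

/-- The fundamental cocircuit of `b ∈ B` with respect to a base `B` :
the unique cocircuit contained in `(E \ B) ∪ {b}`. -/
def fundCocct (M : Matroid α) (B : Set α) (b : α) : Set α :=
  ⋂₀ {C | Cocct M C ∧ C ⊆ insert b (M.E \ B)}

/-- The set of internally active elements of a base `B` :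
elements `b ∈ B` that are the minimum of their fundamental cocircuit. -/
def ActInt [LinearOrder α] (M : Matroid α) (B : Set α) : Set α :=
  {b ∈ B | IsLeast (fundCocct M B b) b}

/-- The set of externally active elements of a base `B` :
elements `e ∈ M.E \ B` that are the minimum of their fundamental circuit. -/
def ActExt [LinearOrder α] (M : Matroid α) (B : Set α) : Set α :=
  {e ∈ M.E \ B | IsLeast (fundCct M B e) e}

/-- A uniactive internal base : internal activity `1` and external activity `0`. -/
def UIntBase [LinearOrder α] (M : Matroid α) (B : Set α) : Prop :=
  M.IsBase B ∧ (ActInt M B).ncard = 1 ∧ (ActExt M B).ncard = 0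

/-- A uniactive external base : internal activity `0` and external activity `1`. -/
def UExtBase [LinearOrder α] (M : Matroid α) (B : Set α) : Prop :=
  M.IsBase B ∧ (ActInt M B).ncard = 0 ∧ (ActExt M B).ncard = 1

/-- `β(M)` : the number of uniactive internal bases. -/
noncomputable def beta [LinearOrder α] (M : Matroid α) : ℕ :=
  {B : Set α | UIntBase M B}.ncard

/-- `β*(M)` : the number of uniactive external bases. -/
noncomputable def betaStar [LinearOrder α] (M : Matroid α) : ℕ :=
  {B : Set α | UExtBase M B}.ncard

/-- A connected matroid : any two elements of the ground set lie on a common circuit. -/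
def Conn (M : Matroid α) : Prop :=
  M.E.Nonempty ∧ ∀ ⦃x y⦄, x ∈ M.E → y ∈ M.E →
    (x = y ∨ ∃ C, Cct M C ∧ x ∈ C ∧ y ∈ C)

/-- A matroid consisting of a single loop. -/
def IsLoopMatroid (M : Matroid α) : Prop := ∃ e, M.E = {e} ∧ M.Dep {e}

/-- A matroid consisting of a single coloop (isthmus). -/
def IsColoopMatroid (M : Matroid α) : Prop := ∃ e, M.E = {e} ∧ M.Indep {e}

/-- A flat : a subset of the ground set whose complement is a union of cocircuits. -/
def IsFlat (M : Matroid α) (F : Set α) : Prop :=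
  F ⊆ M.E ∧ ∃ S : Set (Set α), (∀ C ∈ S, Cocct M C) ∧ M.E \ F = ⋃₀ S

/-- A dual-flat : a union of circuits. -/
def IsDualFlat (M : Matroid α) (F : Set α) : Prop :=
  ∃ S : Set (Set α), (∀ C ∈ S, Cct M C) ∧ F = ⋃₀ S

/-- A cyclic flat : both a flat and a dual-flat. -/
def IsCyclicFlat (M : Matroid α) (F : Set α) : Prop :=
  IsFlat M F ∧ IsDualFlat M F

/-- The data of a filtration : `∅ = F'_ε ⊂ ⋯ ⊂ F'_0 = F_c = F_0 ⊂ ⋯ ⊂ F_ι = E`. -/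
structure Filtration (α : Type*) where
  ι : ℕ
  ε : ℕ
  F : Fin (ι + 1) → Set α
  F' : Fin (ε + 1) → Set α

/-- The `k`-th internal minor `M(F_k)/F_{k-1}` induced by a filtration. -/
def intMinor (M : Matroid α) (f : Filtration α) (k : Fin f.ι) : Matroid α :=
  minor M (f.F k.succ) (f.F k.castSucc)

/-- The `k`-th external minor `M(F'_{k-1})/F'_k` induced by a filtration. -/
def extMinor (M : Matroid α) (f : Filtration α) (k : Fin f.ε) : Matroid α :=
  minor M (f.F' k.castSucc) (f.F' k.succ)

/-- The filtration property : strictly nested subsets from `∅` to `M.E` through `F_c`,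
with the minima of the successive differences increasing on each side of `F_c`. -/
def IsFiltration [LinearOrder α] (M : Matroid α) (f : Filtration α) : Prop :=
  f.F' (Fin.last f.ε) = ∅ ∧
  f.F' 0 = f.F 0 ∧
  f.F (Fin.last f.ι) = M.E ∧
  (∀ k : Fin f.ι, f.F k.castSucc ⊂ f.F k.succ) ∧
  (∀ k : Fin f.ε, f.F' k.succ ⊂ f.F' k.castSucc) ∧
  (∀ j k : Fin f.ι, j < k → ∀ a b : α,
    IsLeast (f.F j.succ \ f.F j.castSucc) a →
    IsLeast (f.F k.succ \ f.F k.castSucc) b → a < b) ∧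
  (∀ j k : Fin f.ε, j < k → ∀ a b : α,
    IsLeast (f.F' j.castSucc \ f.F' j.succ) a →
    IsLeast (f.F' k.castSucc \ f.F' k.succ) b → a < b)

/-- A connected filtration : a filtration all of whose induced internal minors are
connected and not single loops, and all of whose induced external minors are connected
and not single coloops. -/
def IsConnFiltration [LinearOrder α] (M : Matroid α) (f : Filtration α) : Prop :=
  IsFiltration M f ∧
  (∀ k : Fin f.ι, Conn (intMinor M f k) ∧ ¬ IsLoopMatroid (intMinor M f k)) ∧
  (∀ k : Fin f.ε, Conn (extMinor M f k) ∧ ¬ IsColoopMatroid (extMinor M f k))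

/-- An active filtration of a base `B` : a filtration such that `B` induces a uniactive
internal base of each internal minor and a uniactive external base of each external minor. -/
def IsActiveFiltration [LinearOrder α] (M : Matroid α) (B : Set α) (f : Filtration α) : Prop :=
  IsFiltration M f ∧
  (∀ k : Fin f.ι, UIntBase (intMinor M f k) (B ∩ (f.F k.succ \ f.F k.castSucc))) ∧
  (∀ k : Fin f.ε, UExtBase (extMinor M f k) (B ∩ (f.F' k.castSucc \ f.F' k.succ)))

/-- The subset `F(X)` attached to a base `B` and a set `X` of internally active elements :
`B ∩ F` is a base of `M(F)`, the activities of the induced bases of `M(F)` and `M/F`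
split those of `B`, with `Int` of the contraction part equal to `X`. -/
def DecompSet [LinearOrder α] (M : Matroid α) (B X F : Set α) : Prop :=
  F ⊆ M.E ∧
  (M ↾ F).IsBase (B ∩ F) ∧
  ActInt (M ↾ F) (B ∩ F) = ActInt M B \ X ∧
  ActExt (M ↾ F) (B ∩ F) = ActExt M B ∧
  ActInt (con M F) (B \ F) = X ∧
  ActExt (con M F) (B \ F) = ∅

/-- The dual of a filtration : complement every subset and exchange the two sides. -/
def dualFil (M : Matroid α) (f : Filtration α) : Filtration α :=
  ⟨f.ε, f.ι, fun k => M.E \ f.F' k, fun k => M.E \ f.F k⟩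

/-- The set of subsets occurring in a filtration. -/
def termsOf (f : Filtration α) : Set (Set α) :=
  {H | ∃ k, f.F k = H} ∪ {H | ∃ k, f.F' k = H}

end ActiveBij

/-! If `B ∩ F` is a basis of `F`, the fundamental circuit of `e ∈ F \ B` lies in `F` and,
since `x ∈ C*(B;b) ↔ b ∈ C(B;x)`, the fundamental cocircuit of `b ∈ B \ F` avoids `F`. The
fundamental cocircuits of `B ∩ F` in `M(F)` and the fundamental circuits of `B \ F` in `M/F` sit
inside those of `B` in `M`, on the correct side of `F`. Hence `Int_{M(F)}(B ∩ F) = ∅` and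
`Ext_{M/F}(B \ F) = ∅` give the two recursive conditions. These decide membership of each
element from the smaller ones, so on a finite ground set they have at most one solution. -/

namespace Set

theorem eq_of_forall_mem_iff_of_lt {α : Type*} [LinearOrder α] {S G H : Set α} (hS : S.Finite)
    (hG : G ⊆ S) (hH : H ⊆ S) (h : ∀ x ∈ S, (∀ c < x, c ∈ G ↔ c ∈ H) → (x ∈ G ↔ x ∈ H)) :
    G = H := by
  by_contra hne
  have hD : (symmDiff G H).Nonempty := symmDiff_nonempty.2 hne
  have hDS : symmDiff G H ⊆ S := fun x hx => by
    rcases mem_symmDiff.1 hx with hx | hx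
    exacts [hG hx.1, hH hx.1]
  obtain ⟨x, hxD, hmin⟩ := (hS.subset hDS).exists_minimal hD
  have hbelow : ∀ c < x, c ∈ G ↔ c ∈ H := fun c hc => by
    by_contra hcD
    exact hc.not_ge (hmin (show c ∈ symmDiff G H by rw [mem_symmDiff]; tauto) hc.le)
  have hx := h x (hDS hxD) hbelow
  rw [mem_symmDiff] at hxD
  tauto

end Set

namespace Matroid

variable {α : Type*} {M : Matroid α} {B F : Set α} {b e : α}

lemma IsBasis.contract_isBase_sdiff (hBF : M.IsBasis (B ∩ F) F) (hB : M.IsBase B) :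
    (M ／ F).IsBase (B \ F) := by
  rw [← isBasis_ground_iff, contract_ground]
  exact hB.isBasis_ground.contract_isBasis hBF (by rw [sdiff_union_inter]; exact hB.indep)

lemma IsBasis.fundCircuit_inter_eq (hBF : M.IsBasis (B ∩ F) F) (hB : M.Indep B)
    (he : e ∈ F \ B) : M.fundCircuit e (B ∩ F) = M.fundCircuit e B :=
  (hBF.indep.fundCircuit_isCircuit (hBF.subset_closure he.1) (fun h => he.2 h.1))
    |>.eq_fundCircuit_of_subset hB
      ((M.fundCircuit_subset_insert e _).trans (insert_subset_insert inter_subset_left))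

lemma IsBasis.fundCircuit_subset (hBF : M.IsBasis (B ∩ F) F) (hB : M.Indep B)
    (he : e ∈ F \ B) : M.fundCircuit e B ⊆ F := by
  rw [← hBF.fundCircuit_inter_eq hB he]
  exact (M.fundCircuit_subset_insert e _).trans (insert_subset he.1 inter_subset_right)

lemma IsBasis.disjoint_fundCocircuit (hBF : M.IsBasis (B ∩ F) F) (hB : M.IsBase B)
    (hb : b ∈ B \ F) : Disjoint (M.fundCocircuit b B) F := by
  refine disjoint_left.2 fun x hx hxF => hb.2 ?_
  by_cases hxB : x ∈ B
  · have hxb : x ∈ M.fundCocircuit b B ∩ B := ⟨hx, hxB⟩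
    rw [M.fundCocircuit_inter_eq hb.1, mem_singleton_iff] at hxb
    exact hxb ▸ hxF
  · exact hBF.fundCircuit_subset hB.indep ⟨hxF, hxB⟩
      (hB.mem_fundCocircuit_iff_mem_fundCircuit.1 hx)

lemma IsBasis.restrict_fundCocircuit_subset (hBF : M.IsBasis (B ∩ F) F) (hB : M.IsBase B)
    (hb : b ∈ B ∩ F) : (M ↾ F).fundCocircuit b (B ∩ F) ⊆ M.fundCocircuit b B ∩ F := by
  intro x hx
  have hxF : x ∈ F := by
    rcases (M ↾ F).fundCocircuit_subset_insert_compl b (B ∩ F) hx with rfl | hx'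
    exacts [hb.2, hx'.1]
  refine ⟨?_, hxF⟩
  by_cases hxB : x ∈ B
  · have hxb : x ∈ (M ↾ F).fundCocircuit b (B ∩ F) ∩ (B ∩ F) := ⟨hx, hxB, hxF⟩
    rw [fundCocircuit_inter_eq _ hb, mem_singleton_iff] at hxb
    exact hxb ▸ M.mem_fundCocircuit b B
  · rw [hBF.restrict_isBase.mem_fundCocircuit_iff_mem_fundCircuit,
      fundCircuit_restrict inter_subset_right hxF hBF.subset_ground,
      hBF.fundCircuit_inter_eq hB.indep ⟨hxF, hxB⟩] at hx
    exact hB.mem_fundCocircuit_iff_mem_fundCircuit.2 hx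

lemma IsBasis.contract_fundCircuit_subset (hBF : M.IsBasis (B ∩ F) F) (hB : M.IsBase B)
    (he : e ∈ M.E \ (B ∪ F)) : (M ／ F).fundCircuit e (B \ F) ⊆ M.fundCircuit e B \ F := by
  have heB : e ∉ B := fun h => he.2 (.inl h)
  have heF : e ∉ F := fun h => he.2 (.inr h)
  have hC := hB.fundCircuit_isCircuit he.1 heB
  have hCsub : M.fundCircuit e B ⊆ insert e B := M.fundCircuit_subset_insert e B
  have hCdep : (M ／ F).Dep (M.fundCircuit e B \ F) := by
    refine hBF.contract_dep_iff.2 ⟨hC.dep.superset (fun x hx => ?_) ?_, disjoint_sdiff_right⟩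
    · by_cases hxF : x ∈ F
      · have hxe : x ≠ e := fun h => heF (h ▸ hxF)
        exact .inr ⟨(hCsub hx).resolve_left hxe, hxF⟩
      · exact .inl ⟨hx, hxF⟩
    · exact union_subset (sdiff_subset.trans hC.subset_ground)
        (inter_subset_left.trans hB.subset_ground)
  obtain ⟨K, hKsub, hK⟩ := hCdep.exists_isCircuit_subset
  have hKins : K ⊆ insert e (B \ F) := fun x hx =>
    ((hCsub (hKsub hx).1).imp_right fun hxB => ⟨hxB, (hKsub hx).2⟩)
  rw [← hK.eq_fundCircuit_of_subset (hBF.contract_isBase_sdiff hB).indep hKins]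
  exact hKsub

end Matroid

namespace ActiveBij

section

variable {α : Type*} {M : Matroid α} {B F I : Set α} {b e : α}

lemma fundCct_eq_fundCircuit (hI : M.Indep I) (he : e ∈ M.closure I) (heI : e ∉ I) :
    fundCct M I e = M.fundCircuit e I := by
  have hC := hI.fundCircuit_isCircuit he heI
  suffices {C | Cct M C ∧ C ⊆ insert e I} = {M.fundCircuit e I} by
    rw [fundCct, this, sInter_singleton]
  ext C
  exact ⟨fun h => IsCircuit.eq_fundCircuit_of_subset h.1 hI h.2,
    fun h => h ▸ ⟨hC, M.fundCircuit_subset_insert e I⟩⟩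

lemma fundCocct_eq_fundCocircuit (hB : M.IsBase B) (hb : b ∈ B) :
    fundCocct M B b = M.fundCocircuit b B :=
  fundCct_eq_fundCircuit hB.compl_isBase_dual.indep
    (by rw [hB.compl_isBase_dual.closure_eq]; exact hB.subset_ground hb) (fun h => h.2 hb)

lemma con_eq_contract (M : Matroid α) (F : Set α) : con M F = M ／ F := rfl

variable [LinearOrder α]

lemma mem_actInt_iff (hB : M.IsBase B) :
    b ∈ ActInt M B ↔ b ∈ B ∧ ∀ c ∈ M.fundCocircuit b B, b ≤ c := by
  refine ⟨fun h => ⟨h.1, ?_⟩, fun h => ⟨h.1, ?_⟩⟩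
  · rw [← fundCocct_eq_fundCocircuit hB h.1]; exact h.2.2
  · rw [fundCocct_eq_fundCocircuit hB h.1]; exact ⟨M.mem_fundCocircuit b B, h.2⟩

lemma mem_actExt_iff (hB : M.IsBase B) :
    e ∈ ActExt M B ↔ e ∈ M.E \ B ∧ ∀ c ∈ M.fundCircuit e B, e ≤ c := by
  have hfund (he : e ∈ M.E \ B) : fundCct M B e = M.fundCircuit e B :=
    fundCct_eq_fundCircuit hB.indep (by rw [hB.closure_eq]; exact he.1) he.2
  refine ⟨fun h => ⟨h.1, ?_⟩, fun h => ⟨h.1, ?_⟩⟩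
  · rw [← hfund h.1]; exact h.2.2
  · rw [hfund h.1]; exact ⟨M.mem_fundCircuit e B, h.2⟩

def IsRecursiveExtPart (M : Matroid α) (B G : Set α) : Prop :=
  (∀ e ∈ B, (e ∈ G ↔ ∃ c ∈ fundCocct M B e, c < e ∧ c ∈ G)) ∧
    (∀ e ∈ M.E \ B, (e ∈ G ↔ ∀ c ∈ fundCct M B e, c < e → c ∈ G))

lemma IsRecursiveExtPart.eq [M.Finite] {G H : Set α} (hG : IsRecursiveExtPart M B G)
    (hH : IsRecursiveExtPart M B H) (hGE : G ⊆ M.E) (hHE : H ⊆ M.E) : G = H := by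
  refine Set.eq_of_forall_mem_iff_of_lt M.ground_finite hGE hHE fun x hxE hbelow => ?_
  by_cases hxB : x ∈ B
  · rw [hG.1 x hxB, hH.1 x hxB]
    exact exists_congr fun c => and_congr_right fun _ =>
      and_congr_right fun hcx => hbelow c hcx
  · rw [hG.2 x ⟨hxE, hxB⟩, hH.2 x ⟨hxE, hxB⟩]
    exact forall₂_congr fun c _ => forall_congr' fun hcx => hbelow c hcx

lemma isRecursiveExtPart_of_activities (hB : M.IsBase B) (hBF : M.IsBasis (B ∩ F) F)
    (hInt : ActInt (M ↾ F) (B ∩ F) = ∅) (hExt : ActExt (M ／ F) (B \ F) = ∅) :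
    IsRecursiveExtPart M B F := by
  refine ⟨fun b hb => ⟨fun hbF => ?_, ?_⟩,
    fun e he => ⟨fun heF c hc _ => ?_, fun hall => ?_⟩⟩
  · have hnot : b ∉ ActInt (M ↾ F) (B ∩ F) := hInt ▸ notMem_empty b
    rw [mem_actInt_iff hBF.restrict_isBase] at hnot
    push Not at hnot
    obtain ⟨c, hc, hcb⟩ := hnot ⟨hb, hbF⟩
    obtain ⟨hcB, hcF⟩ := hBF.restrict_fundCocircuit_subset hB ⟨hb, hbF⟩ hc
    exact ⟨c, fundCocct_eq_fundCocircuit hB hb ▸ hcB, hcb, hcF⟩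
  · rintro ⟨c, hc, -, hcF⟩
    by_contra hbF
    rw [fundCocct_eq_fundCocircuit hB hb] at hc
    exact disjoint_left.1 (hBF.disjoint_fundCocircuit hB ⟨hb, hbF⟩) hc hcF
  · rw [fundCct_eq_fundCircuit hB.indep (hB.closure_eq ▸ he.1) he.2] at hc
    exact hBF.fundCircuit_subset hB.indep ⟨heF, he.2⟩ hc
  · by_contra heF
    have hnot : e ∉ ActExt (M ／ F) (B \ F) := hExt ▸ notMem_empty e
    rw [mem_actExt_iff (hBF.contract_isBase_sdiff hB)] at hnot
    push Not at hnot
    obtain ⟨c, hc, hce⟩ := hnot ⟨⟨he.1, heF⟩, fun h => he.2 h.1⟩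
    obtain ⟨hcC, hcF⟩ :=
      hBF.contract_fundCircuit_subset hB ⟨he.1, fun h => h.elim he.2 heF⟩ hc
    rw [← fundCct_eq_fundCircuit hB.indep (hB.closure_eq ▸ he.1) he.2] at hcC
    exact hcF (hall c hcC hce)

end

/-- The external part of a base is the unique subset of the ground set satisfying the
single-pass recursive characterization via fundamental circuits and cocircuits. -/
theorem stmt5 {α : Type*} [LinearOrder α] (M : Matroid α) [M.Finite]
    (B : Set α) (hB : M.IsBase B) (F : Set α)
    (hF : DecompSet M B (ActInt M B) F) :
    ((∀ e ∈ B, (e ∈ F ↔ ∃ c ∈ fundCocct M B e, c < e ∧ c ∈ F)) ∧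
      (∀ e ∈ M.E \ B, (e ∈ F ↔ ∀ c ∈ fundCct M B e, c < e → c ∈ F))) ∧
    ∀ G ⊆ M.E,
      ((∀ e ∈ B, (e ∈ G ↔ ∃ c ∈ fundCocct M B e, c < e ∧ c ∈ G)) ∧
        (∀ e ∈ M.E \ B, (e ∈ G ↔ ∀ c ∈ fundCct M B e, c < e → c ∈ G))) →
      G = F := by
  obtain ⟨hFE, hBF, hInt, -, -, hExt⟩ := hF
  rw [isBase_restrict_iff hFE] at hBF
  rw [sdiff_self] at hInt
  rw [con_eq_contract] at hExt
  have hrec : IsRecursiveExtPart M B F := isRecursiveExtPart_of_activities hB hBF hInt hExt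
  exact ⟨hrec, fun G hGE hG => IsRecursiveExtPart.eq hG hrec hGE hFE⟩

end ActiveBij
end

section
/- Let M be a matroid on a finite linearly ordered ground set E and let (F'_ε, …, F'_0, F_c, F_0, …, F_ι) be a connected filtration of M. Then: for every 0 ≤ k ≤ ι, the subset F_k is a flat of M; for every 0 ≤ k ≤ ε, the subset F'_k is a dual-flat of M; and the subset F_c = F_0 = F'_0 is a cyclic flat of M. -/
open Matroid Set

/-!
In a connected filtration every minor `M(F_k)/F_{k-1}` is loopless, since a connected matroid
with a loop is a single loop. So no element of `F_k \ F_{k-1}` lies in the closure of `F_{k-1}`,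
hence none of `E \ F_k` lies in the closure of `F_k`: `F_k` is closed, and a closed set is the
complement of the union of the cocircuits avoiding it. Dually, every minor `M(F'_{k-1})/F'_k` has
no coloop, so each element of `F'_{k-1} \ F'_k` lies on a circuit of `M(F'_{k-1})`, that is, on a
circuit of `M` inside `F'_{k-1} ⊆ F'_k`; this makes `F'_k` a union of circuits.

`Cct`, `Cocct`, `con` and `minor M G F` unfold to Mathlib's `IsCircuit`, `IsCocircuit`, `／` and
`M ↾ G ／ F`, so Mathlib's matroid API applies to them directly.
-/

namespace ActiveBij

section

variable {α : Type*} {M P : Matroid α} {F G X : Set α} {e : α}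

lemma exists_isCocircuit_of_notMem_closure (he : e ∈ M.E) (hecl : e ∉ M.closure X) :
    ∃ K, M.IsCocircuit K ∧ e ∈ K ∧ Disjoint K X := by
  obtain ⟨I, hI⟩ := M.exists_isBasis' X
  have heI : e ∉ I := fun h ↦ hecl (M.mem_closure_of_mem' (hI.subset h))
  have hins : M.Indep (insert e I) :=
    (hI.indep.insert_indep_iff_of_notMem heI).2 ⟨he, by rwa [hI.closure_eq_closure]⟩
  obtain ⟨B, hB, hIB⟩ := hins.exists_isBase_superset
  have heB : e ∈ B := hIB (mem_insert e I)
  refine ⟨M.E \ M.closure (B \ {e}), hB.compl_closure_sdiff_singleton_isCocircuit heB,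
    ⟨he, hB.indep.notMem_closure_sdiff_of_mem heB⟩, ?_⟩
  -- `X` lies in the closure of its basis `I ⊆ B \ {e}`
  have hIBe : I ⊆ B \ {e} := fun x hx ↦
    ⟨hIB (mem_insert_of_mem e hx), by rintro rfl; exact heI hx⟩
  rw [disjoint_left]
  rintro x ⟨hxE, hx⟩ hxX
  refine hx (M.closure_subset_closure hIBe ?_)
  rw [hI.closure_eq_closure]
  exact M.mem_closure_of_mem' hxX hxE

lemma isFlat_of_closure_subset (hF : F ⊆ M.E) (hcl : M.closure F ⊆ F) : IsFlat M F := by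
  refine ⟨hF, {K | M.IsCocircuit K ∧ Disjoint K F}, fun K hK ↦ hK.1, ?_⟩
  apply subset_antisymm
  · rintro e ⟨he, heF⟩
    obtain ⟨K, hK, heK, hKF⟩ := exists_isCocircuit_of_notMem_closure he (fun h ↦ heF (hcl h))
    exact mem_sUnion_of_mem heK ⟨hK, hKF⟩
  · rintro e ⟨K, ⟨hK, hKF⟩, heK⟩
    exact ⟨hK.subset_ground heK, disjoint_left.1 hKF heK⟩

lemma isDualFlat_of_forall_exists_isCircuit
    (h : ∀ e ∈ X, ∃ C, M.IsCircuit C ∧ e ∈ C ∧ C ⊆ X) : IsDualFlat M X := by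
  refine ⟨{C | M.IsCircuit C ∧ C ⊆ X}, fun C hC ↦ hC.1, ?_⟩
  apply subset_antisymm
  · intro e he
    obtain ⟨C, hC, heC, hCX⟩ := h e he
    exact mem_sUnion_of_mem heC ⟨hC, hCX⟩
  · rintro e ⟨C, ⟨_, hCX⟩, heC⟩
    exact hCX heC

lemma Conn.isNonloop (hP : Conn P) (hL : ¬ IsLoopMatroid P) (he : e ∈ P.E) :
    P.IsNonloop e := by
  by_contra hne
  have hloop : P.IsLoop e := P.not_isNonloop_iff.1 hne
  obtain hE | hE := eq_singleton_or_nontrivial he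
  · exact hL ⟨e, hE, hloop.dep⟩
  obtain ⟨g, hg, hge⟩ := hE.exists_ne e
  obtain rfl | ⟨C, hC, heC, hgC⟩ := hP.2 he hg
  · exact hge rfl
  -- a circuit through the loop `e` is `{e}`
  exact hge (hC.2 hloop.dep (singleton_subset_iff.2 heC) hgC)

lemma Conn.not_isColoop (hP : Conn P) (hL : ¬ IsColoopMatroid P) (he : e ∈ P.E) :
    ¬ P.IsColoop e := by
  intro hcoloop
  obtain hE | hE := eq_singleton_or_nontrivial he
  · exact hL ⟨e, hE, indep_singleton.2 hcoloop.isNonloop⟩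
  obtain ⟨g, hg, hge⟩ := hE.exists_ne e
  obtain rfl | ⟨C, hC, heC, -⟩ := hP.2 he hg
  · exact hge rfl
  exact hcoloop.notMem_isCircuit hC heC

lemma notMem_closure_of_isNonloop_contract_restrict (hFG : F ⊆ G) (hG : G ⊆ M.E)
    (he : ((M ↾ G) ／ F).IsNonloop e) : e ∉ M.closure F := by
  rw [contract_isNonloop_iff, restrict_ground_eq, restrict_closure_eq M hFG hG] at he
  exact fun hcl ↦ he.2 ⟨hcl, he.1⟩

lemma exists_isCircuit_of_not_isColoop_contract_restrict (hG : G ⊆ M.E) (he : e ∈ G \ F)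
    (hcoloop : ¬ ((M ↾ G) ／ F).IsColoop e) : ∃ C, M.IsCircuit C ∧ e ∈ C ∧ C ⊆ G := by
  rw [contract_isColoop_iff, and_iff_left he.2,
    isColoop_iff_forall_notMem_isCircuit (show e ∈ (M ↾ G).E from he.1)] at hcoloop
  push Not at hcoloop
  obtain ⟨C, hC, heC⟩ := hcoloop
  exact ⟨C, ((restrict_isCircuit_iff hG).1 hC).1, heC, ((restrict_isCircuit_iff hG).1 hC).2⟩

lemma _root_.Fin.exists_castSucc_and_succ_of_not_of_last {n : ℕ} {p : Fin (n + 1) → Prop}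
    {k : Fin (n + 1)} (hk : ¬ p k) (hlast : p (Fin.last n)) :
    ∃ j : Fin n, k ≤ j.castSucc ∧ ¬ p j.castSucc ∧ p j.succ := by
  by_contra! hstep
  suffices h : ∀ i : Fin (n + 1), k ≤ i → ¬ p i from h _ (Fin.le_last k) hlast
  intro i
  induction i using Fin.induction with
  | zero => intro hki; rwa [nonpos_iff_eq_zero.1 hki] at hk
  | succ j ih =>
    intro hkj
    obtain rfl | hlt := hkj.eq_or_lt
    · exact hk
    exact hstep j (Fin.le_castSucc_iff.2 hlt) (ih (Fin.le_castSucc_iff.2 hlt))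

section Filtration

variable [LinearOrder α] {f : Filtration α}

lemma IsFiltration.monotone_F (hf : IsFiltration M f) : Monotone f.F :=
  Fin.monotone_iff_le_succ.2 fun k ↦ (hf.2.2.2.1 k).subset

lemma IsFiltration.antitone_F' (hf : IsFiltration M f) : Antitone f.F' :=
  Fin.antitone_iff_succ_le.2 fun k ↦ (hf.2.2.2.2.1 k).subset

lemma IsFiltration.F_subset_ground (hf : IsFiltration M f) (k : Fin (f.ι + 1)) :
    f.F k ⊆ M.E :=
  hf.2.2.1 ▸ hf.monotone_F (Fin.le_last k)

lemma IsFiltration.F'_subset_ground (hf : IsFiltration M f) (k : Fin (f.ε + 1)) :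
    f.F' k ⊆ M.E :=
  (hf.antitone_F' (Fin.zero_le k)).trans (hf.2.1 ▸ hf.F_subset_ground 0)

lemma IsConnFiltration.closure_F_subset (hf : IsConnFiltration M f) (k : Fin (f.ι + 1)) :
    M.closure (f.F k) ⊆ f.F k := by
  obtain ⟨hfil, hint, -⟩ := hf
  intro e hecl
  by_contra hek
  obtain ⟨j, hkj, hej, hej'⟩ :=
    Fin.exists_castSucc_and_succ_of_not_of_last (p := (e ∈ f.F ·)) hek
      (by rw [hfil.2.2.1]; exact M.closure_subset_ground _ hecl)
  have hnonloop : (intMinor M f j).IsNonloop e := (hint j).1.isNonloop (hint j).2 ⟨hej', hej⟩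
  refine notMem_closure_of_isNonloop_contract_restrict (hfil.2.2.2.1 j).subset
    (hfil.F_subset_ground _) hnonloop ?_
  exact M.closure_subset_closure (hfil.monotone_F hkj) hecl

lemma IsConnFiltration.exists_isCircuit_subset_F' (hf : IsConnFiltration M f)
    {k : Fin (f.ε + 1)} (he : e ∈ f.F' k) :
    ∃ C, M.IsCircuit C ∧ e ∈ C ∧ C ⊆ f.F' k := by
  obtain ⟨hfil, -, hext⟩ := hf
  obtain ⟨j, hkj, hej, hej'⟩ :=
    Fin.exists_castSucc_and_succ_of_not_of_last (p := (e ∉ f.F' ·)) (not_not_intro he)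
      (by rw [hfil.1]; exact notMem_empty e)
  have hej_mem : e ∈ f.F' j.castSucc \ f.F' j.succ := ⟨not_not.1 hej, hej'⟩
  have hcoloop : ¬ (extMinor M f j).IsColoop e := (hext j).1.not_isColoop (hext j).2 hej_mem
  obtain ⟨C, hC, heC, hCj⟩ :=
    exists_isCircuit_of_not_isColoop_contract_restrict (hfil.F'_subset_ground _) hej_mem hcoloop
  exact ⟨C, hC, heC, hCj.trans (hfil.antitone_F' hkj)⟩

end Filtration

end

theorem stmt7_general {α : Type*} [LinearOrder α] (M : Matroid α)
    (f : Filtration α) (hf : IsConnFiltration M f) :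
    (∀ k : Fin (f.ι + 1), IsFlat M (f.F k)) ∧
    (∀ k : Fin (f.ε + 1), IsDualFlat M (f.F' k)) ∧
    IsCyclicFlat M (f.F 0) := by
  have flat (k : Fin (f.ι + 1)) : IsFlat M (f.F k) :=
    isFlat_of_closure_subset (hf.1.F_subset_ground k) (hf.closure_F_subset k)
  have dualFlat (k : Fin (f.ε + 1)) : IsDualFlat M (f.F' k) :=
    isDualFlat_of_forall_exists_isCircuit fun _ he ↦ hf.exists_isCircuit_subset_F' he
  exact ⟨flat, dualFlat, flat 0, hf.1.2.1 ▸ dualFlat 0⟩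

/-- In a connected filtration, every `F_k` is a flat, every `F'_k` is a dual-flat, and
the middle subset `F_c` is a cyclic flat. -/
theorem stmt7 {α : Type*} [LinearOrder α] (M : Matroid α) [M.Finite]
    (f : Filtration α) (hf : IsConnFiltration M f) :
    (∀ k : Fin (f.ι + 1), IsFlat M (f.F k)) ∧
    (∀ k : Fin (f.ε + 1), IsDualFlat M (f.F' k)) ∧
    IsCyclicFlat M (f.F 0) :=
  stmt7_general M f hf

end ActiveBij
end

section
/- Let M be a matroid on a finite linearly ordered ground set E. For all natural numbers i and e, the number of bases of M with internal activity i and external activity e equals the sum, over all cyclic flats F of M, of the product (number of bases of M/F with internal activity i and external activity 0) × (number of bases of M(F) with internal activity 0 and external activity e). Moreover, the same sum taken over all subsets F of E gives the same value, since every term corresponding to a subset F that is not a cyclic flat is zero. -/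
open Matroid Set

/-!
Deletion–contraction on the largest element `g` of the ground set. Since `g` is largest, it is
externally active in a base avoiding it iff it is a loop, and internally active in a base containing
it iff it is a coloop; deleting or contracting `g` changes the fundamental circuits and cocircuits
of the other elements only by removing `g`, which is never their minimum. Hence the number of bases
of activity `(i, e)` satisfies the Tutte recurrences in `M ＼ g` and `M ／ g`. The convolution
`∑_{A ⊆ E} t_{i,0}(M ／ A) t_{0,e}(M ↾ A)` satisfies the same recurrences: pair `A ⊆ E - g` with
`A + g`, and use that `g` is a loop of `M ／ A` if `g ∈ cl(A)` and a coloop of `M ↾ (A + g)`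
otherwise. A summand vanishes unless `F` is a cyclic flat, because otherwise `M ／ F` has a loop,
which is externally active in every base, or `M ↾ F` has a coloop, internally active in every base.
-/

lemma isLeast_sdiff_singleton_iff {α : Type*} [Preorder α] {s : Set α} {a b : α} (hab : a < b) :
    IsLeast (s \ {b}) a ↔ IsLeast s a := by
  refine ⟨fun h ↦ ⟨h.1.1, fun x hx ↦ ?_⟩, fun h ↦ ⟨⟨h.1, hab.ne⟩, fun x hx ↦ h.2 hx.1⟩⟩
  obtain rfl | hxb := eq_or_ne x b
  · exact hab.le
  · exact h.2 ⟨hx, hxb⟩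

lemma ncard_image_sdiff_singleton {α : Type*} {g : α} {𝒮 : Set (Set α)} (h𝒮 : ∀ B ∈ 𝒮, g ∈ B) :
    ((· \ {g}) '' 𝒮).ncard = 𝒮.ncard := by
  refine InjOn.ncard_image fun B₁ h₁ B₂ h₂ heq ↦ ?_
  simpa [insert_eq_of_mem (h𝒮 B₁ h₁), insert_eq_of_mem (h𝒮 B₂ h₂)] using congrArg (insert g) heq

namespace Matroid

variable {α : Type*} {M : Matroid α} {A B : Set α} {e g : α}

lemma IsBase.contractElem (hB : M.IsBase B) (hgB : g ∈ B) : (M ／ {g}).IsBase (B \ {g}) := by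
  rw [(hB.indep.subset (singleton_subset_iff.2 hgB)).contract_isBase_iff,
    sdiff_union_of_subset (singleton_subset_iff.2 hgB)]
  exact ⟨hB, disjoint_sdiff_left⟩

lemma IsBase.fundCircuit_contractElem (hB : M.IsBase B) (hgB : g ∈ B) (he : e ∈ M.E \ B) :
    (M ／ {g}).fundCircuit e (B \ {g}) = M.fundCircuit e B \ {g} := by
  have hg : M.IsNonloop g := hB.indep.isNonloop_of_mem hgB
  have heg : e ≠ g := fun h ↦ he.2 (h ▸ hgB)
  have hB' := hB.contractElem hgB
  have he' : e ∈ (M ／ {g}).E \ (B \ {g}) := ⟨⟨he.1, heg⟩, fun h ↦ he.2 h.1⟩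
  ext x
  obtain rfl | hxg := eq_or_ne x g
  · refine iff_of_false (fun hx ↦ ?_) fun hx ↦ hx.2 rfl
    obtain hxe | hxB := (M ／ {x}).fundCircuit_subset_insert e (B \ {x}) hx
    · exact heg hxe.symm
    · exact hxB.2 rfl
  have hset : insert g (insert e (B \ {g}) \ {x}) = insert e B \ {x} := by
    ext y
    obtain rfl | hyg := eq_or_ne y g <;> simp [*, hxg.symm]
  rw [hB'.indep.mem_fundCircuit_iff (by rw [hB'.closure_eq]; exact he'.1) he'.2,
    hg.contractElem_indep_iff, hset]
  simp [hxg, hxg.symm, heg.symm, hgB,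
    hB.indep.mem_fundCircuit_iff (by rw [hB.closure_eq]; exact he.1) he.2]

lemma deleteElem_restrict (hA : A ⊆ M.E \ {g}) : (M ＼ {g}) ↾ A = M ↾ A := by
  rw [delete_eq_restrict, restrict_restrict_eq M hA]

lemma restrict_insert_deleteElem (hgA : g ∉ A) : (M ↾ insert g A) ＼ {g} = M ↾ A := by
  rw [delete_eq_restrict, restrict_ground_eq, insert_sdiff_self_of_notMem hgA,
    restrict_restrict_eq M (subset_insert g A)]

lemma contract_insert (M : Matroid α) (g : α) (A : Set α) : M ／ insert g A = M ／ {g} ／ A := by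
  rw [contract_contract, singleton_union]

end Matroid

namespace ActiveBij

section

variable {α : Type*} {M : Matroid α} {B C F R : Set α} {e : α}

lemma cct_iff_isCircuit : Cct M C ↔ M.IsCircuit C := Iff.rfl

lemma fundCct_eq_fundCircuit_s13 (hB : M.IsBase B) (he : e ∈ M.E \ B) :
    fundCct M B e = M.fundCircuit e B := by
  have hcirc := hB.fundCircuit_isCircuit he.1 he.2
  have hfam : {C | Cct M C ∧ C ⊆ insert e B} = {M.fundCircuit e B} := by
    ext C
    simp only [cct_iff_isCircuit, mem_ofPred_eq, mem_singleton_iff]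
    exact ⟨fun h ↦ h.1.eq_fundCircuit_of_subset hB.indep h.2,
      fun h ↦ h ▸ ⟨hcirc, M.fundCircuit_subset_insert e B⟩⟩
  rw [fundCct, hfam, sInter_singleton]

lemma fundCct_restrict (hR : R ⊆ M.E) (heB : insert e B ⊆ R) :
    fundCct (M ↾ R) B e = fundCct M B e := by
  have hfam : {C | Cct (M ↾ R) C ∧ C ⊆ insert e B} = {C | Cct M C ∧ C ⊆ insert e B} := by
    ext C
    simp only [cct_iff_isCircuit, mem_ofPred_eq, restrict_isCircuit_iff hR]
    exact ⟨fun h ↦ ⟨h.1.1, h.2⟩, fun h ↦ ⟨⟨h.1, h.2.trans heB⟩, h.2⟩⟩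
  rw [fundCct, fundCct, hfam]

lemma exists_isLoop_contract_of_not_isFlat (hF : F ⊆ M.E) (h : ¬ IsFlat M F) :
    ∃ x, (M ／ F).IsLoop x := by
  by_contra! hno
  refine h ⟨hF, {K | Cocct M K ∧ K ⊆ M.E \ F}, fun K hK ↦ hK.1, ?_⟩
  ext x
  refine ⟨fun hx ↦ ?_, fun ⟨K, ⟨_, hKF⟩, hxK⟩ ↦ hKF hxK⟩
  obtain ⟨K, hK, hxK⟩ := ((not_isLoop_iff (M := M ／ F) hx).1 (hno x)).exists_mem_isCocircuit
  exact ⟨K, ⟨hK.of_contract, hK.subset_ground⟩, hxK⟩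

lemma exists_isColoop_restrict_of_not_isDualFlat (hF : F ⊆ M.E) (h : ¬ IsDualFlat M F) :
    ∃ x, (M ↾ F).IsColoop x := by
  by_contra! hno
  refine h ⟨{C | Cct M C ∧ C ⊆ F}, fun C hC ↦ hC.1, ?_⟩
  ext x
  refine ⟨fun hx ↦ ?_, fun ⟨C, ⟨_, hCF⟩, hxC⟩ ↦ hCF hxC⟩
  obtain ⟨C, hC, hxC⟩ := exists_mem_isCircuit_of_not_isColoop (M := M ↾ F) hx (hno x)
  exact ⟨C, (restrict_isCircuit_iff hF).1 hC, hxC⟩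

end

section

variable {α : Type*} [LinearOrder α] {M : Matroid α} {B D R : Set α} {g x : α}

lemma actExt_eq_of_isBase (hB : M.IsBase B) :
    ActExt M B = {e ∈ M.E \ B | IsLeast (M.fundCircuit e B) e} := by
  ext e
  simp only [ActExt, mem_ofPred_eq]
  exact and_congr_right fun he ↦ by rw [fundCct_eq_fundCircuit_s13 hB he]

lemma actInt_eq_actExt_dual (hB : B ⊆ M.E) : ActInt M B = ActExt M✶ (M.E \ B) := by
  ext b
  simp only [ActInt, ActExt, fundCocct, Cocct, dual_ground, sdiff_sdiff_cancel_left hB]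
  rfl

lemma actExt_restrict (hR : R ⊆ M.E) (hBR : B ⊆ R) : ActExt (M ↾ R) B = ActExt M B ∩ R := by
  ext e
  simp only [ActExt, mem_ofPred_eq, restrict_ground_eq, mem_inter_iff, mem_sdiff]
  constructor
  · rintro ⟨⟨heR, heB⟩, hleast⟩
    rw [fundCct_restrict hR (insert_subset heR hBR)] at hleast
    exact ⟨⟨⟨hR heR, heB⟩, hleast⟩, heR⟩
  · rintro ⟨⟨⟨-, heB⟩, hleast⟩, heR⟩
    rw [← fundCct_restrict hR (insert_subset heR hBR)] at hleast
    exact ⟨⟨heR, heB⟩, hleast⟩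

lemma actExt_delete (hB : B ⊆ M.E) (hBD : Disjoint B D) : ActExt (M ＼ D) B = ActExt M B \ D := by
  rw [delete_eq_restrict, actExt_restrict sdiff_subset (subset_sdiff.2 ⟨hB, hBD⟩),
    ← inter_sdiff_assoc, inter_eq_left.2 fun e he ↦ he.1.1]

lemma actExt_contractElem (hmax : ∀ x ∈ M.E, x ≤ g) (hB : M.IsBase B) (hgB : g ∈ B) :
    ActExt (M ／ {g}) (B \ {g}) = ActExt M B := by
  rw [actExt_eq_of_isBase hB, actExt_eq_of_isBase (hB.contractElem hgB)]
  ext e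
  simp only [mem_ofPred_eq, contract_ground]
  rw [sdiff_sdiff_sdiff_cancel_right (singleton_subset_iff.2 hgB)]
  refine and_congr_right fun he ↦ ?_
  have heg : e < g := (hmax e he.1).lt_of_ne fun h ↦ he.2 (h ▸ hgB)
  rw [hB.fundCircuit_contractElem hgB he, isLeast_sdiff_singleton_iff heg]

lemma actInt_contractElem (hB : M.IsBase B) (hgB : g ∈ B) :
    ActInt (M ／ {g}) (B \ {g}) = ActInt M B \ {g} := by
  rw [actInt_eq_actExt_dual (sdiff_subset_sdiff_left hB.subset_ground), dual_contract,
    contract_ground, sdiff_sdiff_sdiff_cancel_right (singleton_subset_iff.2 hgB),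
    actExt_delete (by simp) (disjoint_singleton_right.2 fun h ↦ h.2 hgB),
    actInt_eq_actExt_dual hB.subset_ground]

lemma actInt_deleteElem (hmax : ∀ x ∈ M.E, x ≤ g) (hB : M.IsBase B) (hg : g ∈ M.E \ B) :
    ActInt (M ＼ {g}) B = ActInt M B := by
  rw [actInt_eq_actExt_dual (subset_sdiff.2 ⟨hB.subset_ground, by simpa using hg.2⟩),
    dual_delete, delete_ground, Set.sdiff_sdiff_comm, actExt_contractElem (by simpa using hmax)
      hB.compl_isBase_dual hg, actInt_eq_actExt_dual hB.subset_ground]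

lemma mem_actExt_of_isLoop (hx : M.IsLoop x) (hB : M.IsBase B) : x ∈ ActExt M B := by
  rw [actExt_eq_of_isBase hB]
  refine ⟨⟨hx.mem_ground, hx.notMem_of_indep hB.indep⟩, ?_⟩
  rw [← hx.isCircuit.eq_fundCircuit_of_subset hB.indep (by simp)]
  exact isLeast_singleton

lemma mem_actInt_of_isColoop (hx : M.IsColoop x) (hB : M.IsBase B) : x ∈ ActInt M B := by
  rw [actInt_eq_actExt_dual hB.subset_ground]
  exact mem_actExt_of_isLoop hx.dual_isLoop hB.compl_isBase_dual

lemma mem_actExt_iff_isLoop (hmax : ∀ x ∈ M.E, x ≤ g) (hB : M.IsBase B) (hg : g ∈ M.E \ B) :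
    g ∈ ActExt M B ↔ M.IsLoop g := by
  refine ⟨fun h ↦ ?_, fun h ↦ mem_actExt_of_isLoop h hB⟩
  rw [actExt_eq_of_isBase hB] at h
  have hcirc := hB.fundCircuit_isCircuit hg.1 hg.2
  have hsingle : M.fundCircuit g B = {g} := eq_singleton_iff_unique_mem.2
    ⟨M.mem_fundCircuit g B, fun y hy ↦ (hmax y (hcirc.subset_ground hy)).antisymm (h.2.2 hy)⟩
  rw [← singleton_isCircuit, ← hsingle]
  exact hcirc

lemma mem_actInt_iff_isColoop (hmax : ∀ x ∈ M.E, x ≤ g) (hB : M.IsBase B) (hgB : g ∈ B) :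
    g ∈ ActInt M B ↔ M.IsColoop g := by
  rw [actInt_eq_actExt_dual hB.subset_ground, ← dual_isLoop_iff_isColoop]
  exact mem_actExt_iff_isLoop (by simpa using hmax) hB.compl_isBase_dual
    ⟨hB.subset_ground hgB, fun h ↦ h.2 hgB⟩

end

section

variable {α : Type*} [LinearOrder α] {M : Matroid α} {A B F : Set α} {g x : α} {i e : ℕ}

def basesOfActivity (M : Matroid α) (i e : ℕ) : Set (Set α) :=
  {B | M.IsBase B ∧ (ActInt M B).ncard = i ∧ (ActExt M B).ncard = e}

noncomputable def activityCount (M : Matroid α) (i e : ℕ) : ℕ :=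
  (basesOfActivity M i e).ncard

noncomputable def activityConvolution (M : Matroid α) (i e : ℕ) : ℕ :=
  ∑ᶠ A ∈ 𝒫 M.E, activityCount (M ／ A) i 0 * activityCount (M ↾ A) 0 e

lemma mem_basesOfActivity_deleteElem (hmax : ∀ x ∈ M.E, x ≤ g) (hgE : g ∈ M.E)
    (hg : ¬ M.IsColoop g) :
    B ∈ basesOfActivity (M ＼ {g}) i e ↔
      (M.IsBase B ∧ g ∉ B) ∧ (ActInt M B).ncard = i ∧ (ActExt M B \ {g}).ncard = e := by
  have hcoindep : M.Coindep {g} := by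
    rwa [Coindep, indep_singleton, ← not_isLoop_iff, dual_isLoop_iff_isColoop]
  simp only [basesOfActivity, mem_ofPred_eq, hcoindep.delete_isBase_iff, disjoint_singleton_right]
  refine and_congr_right fun hB ↦ ?_
  rw [actInt_deleteElem hmax hB.1 ⟨hgE, hB.2⟩,
    actExt_delete hB.1.subset_ground (disjoint_singleton_right.2 hB.2)]

lemma sdiff_mem_basesOfActivity_contractElem (hmax : ∀ x ∈ M.E, x ≤ g) (hg : M.IsNonloop g)
    (hgB : g ∈ B) :
    B \ {g} ∈ basesOfActivity (M ／ {g}) i e ↔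
      M.IsBase B ∧ (ActInt M B \ {g}).ncard = i ∧ (ActExt M B).ncard = e := by
  rw [basesOfActivity, mem_ofPred_eq, (indep_singleton.2 hg).contract_isBase_iff,
    sdiff_union_of_subset (singleton_subset_iff.2 hgB), and_iff_left disjoint_sdiff_left]
  refine and_congr_right fun hB ↦ ?_
  rw [actInt_contractElem hB hgB, actExt_contractElem hmax hB hgB]

lemma basesOfActivity_contractElem (hmax : ∀ x ∈ M.E, x ≤ g) (hg : M.IsNonloop g) :
    basesOfActivity (M ／ {g}) i e = (· \ {g}) ''
      {B | (M.IsBase B ∧ g ∈ B) ∧ (ActInt M B \ {g}).ncard = i ∧ (ActExt M B).ncard = e} := by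
  ext B'
  constructor
  · intro hB'
    have hgB' : g ∉ B' := fun h ↦ (hB'.1.subset_ground h).2 rfl
    rw [← insert_sdiff_self_of_notMem hgB',
      sdiff_mem_basesOfActivity_contractElem hmax hg (mem_insert g B')] at hB'
    exact ⟨insert g B', ⟨⟨hB'.1, mem_insert g B'⟩, hB'.2⟩, insert_sdiff_self_of_notMem hgB'⟩
  · rintro ⟨B, ⟨⟨hB, hgB⟩, hact⟩, rfl⟩
    exact (sdiff_mem_basesOfActivity_contractElem hmax hg hgB).2 ⟨hB, hact⟩

lemma activityCount_of_ground_eq_empty (hE : M.E = ∅) :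
    activityCount M i e = if i = 0 ∧ e = 0 then 1 else 0 := by
  obtain ⟨B₀, hB₀⟩ := M.exists_isBase
  have hB₀_empty : B₀ = ∅ := subset_empty_iff.1 (hE ▸ hB₀.subset_ground)
  have hbases : ∀ B, M.IsBase B ↔ B = ∅ := fun B ↦
    ⟨fun hB ↦ subset_empty_iff.1 (hE ▸ hB.subset_ground), fun hB ↦ hB ▸ hB₀_empty ▸ hB₀⟩
  have hset : basesOfActivity M i e = {B | B = ∅ ∧ i = 0 ∧ e = 0} := by
    ext B
    simp only [basesOfActivity, mem_ofPred_eq, hbases]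
    refine and_congr_right fun hB ↦ ?_
    have hI : ActInt M B = ∅ := subset_empty_iff.1 fun x hx ↦ hB ▸ hx.1
    have hX : ActExt M B = ∅ := subset_empty_iff.1 fun x hx ↦ hE ▸ hx.1.1
    rw [hI, hX, ncard_empty, eq_comm (b := i), eq_comm (b := e)]
  rw [activityCount, hset]
  split_ifs with h <;> simp [h]

lemma activityCount_eq_activityConvolution_of_ground_eq_empty (hE : M.E = ∅) :
    activityCount M i e = activityConvolution M i e := by
  have hrestrict : M ↾ ∅ = M := by rw [← hE, restrict_ground_eq_self]
  rw [activityConvolution, hE, powerset_empty, finsum_mem_singleton, contract_empty, hrestrict,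
    activityCount_of_ground_eq_empty hE, activityCount_of_ground_eq_empty hE,
    activityCount_of_ground_eq_empty hE]
  by_cases hi : i = 0 <;> by_cases he : e = 0 <;> simp [hi, he]

variable [M.Finite]

lemma basesOfActivity_finite : (basesOfActivity M i e).Finite :=
  M.ground_finite.finite_subsets.subset fun _ hB ↦ hB.1.subset_ground

lemma actExt_finite (B : Set α) : (ActExt M B).Finite :=
  M.ground_finite.subset fun _ h ↦ h.1.1

lemma actInt_finite (hB : B ⊆ M.E) : (ActInt M B).Finite :=
  M.ground_finite.subset fun _ h ↦ hB h.1

lemma activityCount_eq_zero_of_isLoop (hx : M.IsLoop x) : activityCount M i 0 = 0 := by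
  rw [activityCount, ncard_eq_zero basesOfActivity_finite]
  refine eq_empty_of_forall_notMem fun B ⟨hB, _, he⟩ ↦ ?_
  rw [ncard_eq_zero (actExt_finite B)] at he
  exact (he ▸ mem_actExt_of_isLoop hx hB : x ∈ (∅ : Set α))

lemma activityCount_eq_zero_of_isColoop (hx : M.IsColoop x) : activityCount M 0 e = 0 := by
  rw [activityCount, ncard_eq_zero basesOfActivity_finite]
  refine eq_empty_of_forall_notMem fun B ⟨hB, hi, _⟩ ↦ ?_
  rw [ncard_eq_zero (actInt_finite hB.subset_ground)] at hi
  exact (hi ▸ mem_actInt_of_isColoop hx hB : x ∈ (∅ : Set α))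

lemma activityCount_deleteElem_of_isLoop (hmax : ∀ x ∈ M.E, x ≤ g) (hg : M.IsLoop g) :
    activityCount (M ＼ {g}) i e = activityCount M i (e + 1) := by
  rw [activityCount, activityCount]
  congr 1
  ext B
  rw [mem_basesOfActivity_deleteElem hmax hg.mem_ground hg.not_isColoop]
  refine ⟨fun ⟨⟨hB, _⟩, hi, he⟩ ↦ ⟨hB, hi, ?_⟩, fun ⟨hB, hi, he⟩ ↦ ⟨⟨hB, ?_⟩, hi, ?_⟩⟩
  · rw [← he, ncard_sdiff_singleton_add_one (mem_actExt_of_isLoop hg hB) (actExt_finite B)]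
  · exact hg.notMem_of_indep hB.indep
  · have := ncard_sdiff_singleton_add_one (mem_actExt_of_isLoop hg hB) (actExt_finite B)
    omega

lemma activityCount_contractElem_of_isColoop (hmax : ∀ x ∈ M.E, x ≤ g) (hg : M.IsColoop g) :
    activityCount (M ／ {g}) i e = activityCount M (i + 1) e := by
  have hset : {B | (M.IsBase B ∧ g ∈ B) ∧ (ActInt M B \ {g}).ncard = i ∧
      (ActExt M B).ncard = e} = basesOfActivity M (i + 1) e := by
    ext B
    refine ⟨fun ⟨⟨hB, _⟩, hi, he⟩ ↦ ⟨hB, ?_, he⟩,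
      fun ⟨hB, hi, he⟩ ↦ ⟨⟨hB, hg.mem_of_isBase hB⟩, ?_, he⟩⟩
    · rw [← hi, ncard_sdiff_singleton_add_one (mem_actInt_of_isColoop hg hB)
        (actInt_finite hB.subset_ground)]
    · have := ncard_sdiff_singleton_add_one (mem_actInt_of_isColoop hg hB)
        (actInt_finite hB.subset_ground)
      omega
  rw [activityCount, activityCount, basesOfActivity_contractElem hmax hg.isNonloop, hset,
    ncard_image_sdiff_singleton fun B hB ↦ hg.mem_of_isBase hB.1]

lemma activityCount_eq_delete_add_contract (hmax : ∀ x ∈ M.E, x ≤ g) (hg : M.IsNonloop g)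
    (hg' : ¬ M.IsColoop g) :
    activityCount M i e = activityCount (M ＼ {g}) i e + activityCount (M ／ {g}) i e := by
  have hext : ∀ {B}, M.IsBase B → g ∉ B → ActExt M B \ {g} = ActExt M B := fun hB hgB ↦
    sdiff_singleton_eq_self fun h ↦
      hg.not_isLoop ((mem_actExt_iff_isLoop hmax hB ⟨hg.mem_ground, hgB⟩).1 h)
  have hint : ∀ {B}, M.IsBase B → g ∈ B → ActInt M B \ {g} = ActInt M B := fun hB hgB ↦
    sdiff_singleton_eq_self fun h ↦ hg' ((mem_actInt_iff_isColoop hmax hB hgB).1 h)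
  have hdel : basesOfActivity (M ＼ {g}) i e = basesOfActivity M i e \ {B | g ∈ B} := by
    ext B
    rw [mem_basesOfActivity_deleteElem hmax hg.mem_ground hg']
    exact ⟨fun ⟨⟨hB, hgB⟩, hi, he⟩ ↦ ⟨⟨hB, hi, hext hB hgB ▸ he⟩, hgB⟩,
      fun ⟨⟨hB, hi, he⟩, hgB⟩ ↦ ⟨⟨hB, hgB⟩, hi, (hext hB hgB).symm ▸ he⟩⟩
  have hcon : {B | (M.IsBase B ∧ g ∈ B) ∧ (ActInt M B \ {g}).ncard = i ∧
      (ActExt M B).ncard = e} = basesOfActivity M i e ∩ {B | g ∈ B} := by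
    ext B
    exact ⟨fun ⟨⟨hB, hgB⟩, hi, he⟩ ↦ ⟨⟨hB, hint hB hgB ▸ hi, he⟩, hgB⟩,
      fun ⟨⟨hB, hi, he⟩, hgB⟩ ↦ ⟨⟨hB, hgB⟩, (hint hB hgB).symm ▸ hi, he⟩⟩
  rw [activityCount, activityCount, activityCount, hdel, basesOfActivity_contractElem hmax hg, hcon,
    ncard_image_sdiff_singleton fun B hB ↦ hB.2, add_comm,
    ncard_inter_add_ncard_sdiff_eq_ncard _ _ basesOfActivity_finite]

lemma activityConvolution_eq_zero_of_isLoop (hx : M.IsLoop x) : activityConvolution M i 0 = 0 := by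
  refine finsum_mem_eq_zero_of_forall_eq_zero fun A (hA : A ⊆ M.E) ↦ ?_
  have := restrict_finite (M := M) (M.ground_finite.subset hA)
  by_cases hxA : x ∈ A
  · rw [activityCount_eq_zero_of_isLoop (restrict_isLoop_iff.2 ⟨hxA, .inl hx⟩), mul_zero]
  · rw [activityCount_eq_zero_of_isLoop (contract_isLoop_iff_mem_closure.2 ⟨hx.mem_closure A, hxA⟩),
      zero_mul]

lemma activityConvolution_eq_zero_of_isColoop (hx : M.IsColoop x) :
    activityConvolution M 0 e = 0 := by
  refine finsum_mem_eq_zero_of_forall_eq_zero fun A (hA : A ⊆ M.E) ↦ ?_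
  have := restrict_finite (M := M) (M.ground_finite.subset hA)
  by_cases hxA : x ∈ A
  · rw [activityCount_eq_zero_of_isColoop ((restrict_isColoop_iff hA).2
      ⟨hx.notMem_closure_of_notMem (by simp), hxA⟩), mul_zero]
  · rw [activityCount_eq_zero_of_isColoop (contract_isColoop_iff.2 ⟨hx, hxA⟩), zero_mul]

lemma activityConvolution_eq_sum_sdiff_singleton (hg : g ∈ M.E) :
    activityConvolution M i e = ∑ᶠ A ∈ 𝒫 (M.E \ {g}),
      (activityCount (M ／ A) i 0 * activityCount (M ↾ A) 0 e +
        activityCount (M ／ {g} ／ A) i 0 * activityCount (M ↾ insert g A) 0 e) := by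
  rw [activityConvolution, finsum_mem_powerset_sdiff_elem M.ground_finite hg,
    ← finsum_mem_add_distrib (s := 𝒫 (M.E \ {g})) M.ground_finite.sdiff.finite_subsets]
  simp only [contract_insert]

lemma activityConvolution_deleteElem_of_isLoop (hmax : ∀ x ∈ M.E, x ≤ g) (hg : M.IsLoop g) :
    activityConvolution (M ＼ {g}) i e = activityConvolution M i (e + 1) := by
  rw [activityConvolution_eq_sum_sdiff_singleton hg.mem_ground, activityConvolution, delete_ground]
  refine finsum_mem_congr rfl fun A (hA : A ⊆ M.E \ {g}) ↦ ?_
  have hgA : g ∉ A := fun h ↦ (hA h).2 rfl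
  have hAE : insert g A ⊆ M.E := insert_subset hg.mem_ground (hA.trans sdiff_subset)
  have := restrict_finite (M := M) (M.ground_finite.subset hAE)
  rw [activityCount_eq_zero_of_isLoop (contract_isLoop_iff_mem_closure.2 ⟨hg.mem_closure A, hgA⟩),
    zero_mul, zero_add, contract_eq_delete_of_subset_loops (singleton_subset_iff.2 hg),
    deleteElem_restrict hA, ← restrict_insert_deleteElem hgA,
    activityCount_deleteElem_of_isLoop (fun x hx ↦ hmax x (hAE hx))
      (restrict_isLoop_iff.2 ⟨mem_insert g A, .inl hg⟩)]

lemma activityConvolution_contractElem_of_isColoop (hmax : ∀ x ∈ M.E, x ≤ g)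
    (hg : M.IsColoop g) :
    activityConvolution (M ／ {g}) i e = activityConvolution M (i + 1) e := by
  rw [activityConvolution_eq_sum_sdiff_singleton hg.mem_ground, activityConvolution,
    contract_ground]
  refine finsum_mem_congr rfl fun A (hA : A ⊆ M.E \ {g}) ↦ ?_
  have hgA : g ∉ A := fun h ↦ (hA h).2 rfl
  have hAE : insert g A ⊆ M.E := insert_subset hg.mem_ground (hA.trans sdiff_subset)
  have := restrict_finite (M := M) (M.ground_finite.subset hAE)
  have hgQ : (M ↾ insert g A).IsColoop g :=
    (restrict_isColoop_iff hAE).2 ⟨hg.notMem_closure_of_notMem fun h ↦ h.2 rfl, mem_insert g A⟩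
  rw [activityCount_eq_zero_of_isColoop hgQ, mul_zero, add_zero,
    ← activityCount_contractElem_of_isColoop (M := M ／ A) (fun x hx ↦ hmax x hx.1)
      (contract_isColoop_iff.2 ⟨hg, hgA⟩),
    contract_comm, contract_eq_delete_of_subset_coloops (singleton_subset_iff.2 hg),
    deleteElem_restrict hA]

lemma activityConvolution_summands_eq_delete_add_contract (hmax : ∀ x ∈ M.E, x ≤ g)
    (hg : M.IsNonloop g) (hg' : ¬ M.IsColoop g) (hA : A ⊆ M.E \ {g}) :
    activityCount (M ／ A) i 0 * activityCount (M ↾ A) 0 e +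
        activityCount (M ／ {g} ／ A) i 0 * activityCount (M ↾ insert g A) 0 e =
      activityCount (M ＼ {g} ／ A) i 0 * activityCount ((M ＼ {g}) ↾ A) 0 e +
        activityCount (M ／ {g} ／ A) i 0 * activityCount ((M ／ {g}) ↾ A) 0 e := by
  have hgA : g ∉ A := fun h ↦ (hA h).2 rfl
  have hAE : insert g A ⊆ M.E := insert_subset hg.mem_ground (hA.trans sdiff_subset)
  have := restrict_finite (M := M) (M.ground_finite.subset hAE)
  have hmaxP : ∀ x ∈ (M ／ A).E, x ≤ g := fun x hx ↦ hmax x hx.1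
  have hmaxQ : ∀ x ∈ (M ↾ insert g A).E, x ≤ g := fun x hx ↦ hmax x (hAE hx)
  rw [deleteElem_restrict hA, ← contract_delete_comm M (disjoint_singleton_right.2 hgA),
    contract_comm M {g} A, contract_restrict_eq_restrict_contract M (disjoint_singleton_left.2 hgA),
    union_singleton, ← restrict_insert_deleteElem hgA]
  have hclQ : g ∈ M.closure A ↔ ¬ (M ↾ insert g A).IsColoop g := by
    rw [restrict_isColoop_iff hAE, insert_sdiff_self_of_notMem hgA]
    simp
  by_cases hcl : g ∈ M.closure A
  · have hgP : (M ／ A).IsLoop g := contract_isLoop_iff_mem_closure.2 ⟨hcl, hgA⟩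
    rw [activityCount_eq_zero_of_isLoop hgP, ← contract_eq_delete_of_subset_loops
      (singleton_subset_iff.2 hgP), activityCount_eq_delete_add_contract (M := M ↾ insert g A) hmaxQ
        (restrict_isNonloop_iff.2 ⟨hg, mem_insert g A⟩) (hclQ.1 hcl)]
    ring
  · have hgQ : (M ↾ insert g A).IsColoop g := not_not.1 (hcl ∘ hclQ.2)
    rw [activityCount_eq_zero_of_isColoop hgQ, contract_eq_delete_of_subset_coloops
      (singleton_subset_iff.2 hgQ), activityCount_eq_delete_add_contract (M := M ／ A) hmaxP
        (contract_isNonloop_iff.2 ⟨hg.mem_ground, hcl⟩) (fun h ↦ hg' (contract_isColoop_iff.1 h).1)]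
    ring

lemma activityConvolution_eq_delete_add_contract (hmax : ∀ x ∈ M.E, x ≤ g) (hg : M.IsNonloop g)
    (hg' : ¬ M.IsColoop g) :
    activityConvolution M i e =
      activityConvolution (M ＼ {g}) i e + activityConvolution (M ／ {g}) i e := by
  rw [activityConvolution_eq_sum_sdiff_singleton hg.mem_ground, activityConvolution,
    activityConvolution, delete_ground, contract_ground,
    ← finsum_mem_add_distrib (s := 𝒫 (M.E \ {g})) M.ground_finite.sdiff.finite_subsets]
  exact finsum_mem_congr rfl fun A hA ↦
    activityConvolution_summands_eq_delete_add_contract hmax hg hg' hA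

lemma activityCount_mul_eq_zero_of_not_isCyclicFlat (hF : F ⊆ M.E) (h : ¬ IsCyclicFlat M F) :
    activityCount (M ／ F) i 0 * activityCount (M ↾ F) 0 e = 0 := by
  have := restrict_finite (M := M) (M.ground_finite.subset hF)
  rcases not_and_or.1 h with hflat | hdual
  · obtain ⟨x, hx⟩ := exists_isLoop_contract_of_not_isFlat hF hflat
    rw [activityCount_eq_zero_of_isLoop hx, zero_mul]
  · obtain ⟨x, hx⟩ := exists_isColoop_restrict_of_not_isDualFlat hF hdual
    rw [activityCount_eq_zero_of_isColoop hx, mul_zero]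

lemma activityConvolution_eq_finsum_isCyclicFlat :
    activityConvolution M i e =
      ∑ᶠ F ∈ {F | IsCyclicFlat M F}, activityCount (M ／ F) i 0 * activityCount (M ↾ F) 0 e := by
  refine finsum_mem_inter_support_eq' _ _ _ fun F hF ↦ ⟨fun hFE ↦ ?_, fun hcyc ↦ hcyc.1.1⟩
  by_contra hcyc
  exact hF (activityCount_mul_eq_zero_of_not_isCyclicFlat hFE hcyc)

lemma activityCount_eq_activityConvolution_of_minors (hmax : ∀ x ∈ M.E, x ≤ g) (hgE : g ∈ M.E)
    (h_delete : ∀ i e, activityCount (M ＼ {g}) i e = activityConvolution (M ＼ {g}) i e)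
    (h_contract : ∀ i e, activityCount (M ／ {g}) i e = activityConvolution (M ／ {g}) i e) :
    activityCount M i e = activityConvolution M i e := by
  by_cases hl : M.IsLoop g
  · cases e with
    | zero => rw [activityCount_eq_zero_of_isLoop hl, activityConvolution_eq_zero_of_isLoop hl]
    | succ e => rw [← activityCount_deleteElem_of_isLoop hmax hl,
        ← activityConvolution_deleteElem_of_isLoop hmax hl, h_delete]
  by_cases hc : M.IsColoop g
  · cases i with
    | zero => rw [activityCount_eq_zero_of_isColoop hc, activityConvolution_eq_zero_of_isColoop hc]
    | succ i => rw [← activityCount_contractElem_of_isColoop hmax hc,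
        ← activityConvolution_contractElem_of_isColoop hmax hc, h_contract]
  have hnl := (not_isLoop_iff hgE).1 hl
  rw [activityCount_eq_delete_add_contract hmax hnl hc,
    activityConvolution_eq_delete_add_contract hmax hnl hc, h_delete, h_contract]

end

theorem activityCount_eq_activityConvolution {α : Type*} [LinearOrder α] (M : Matroid α)
    [M.Finite] (i e : ℕ) : activityCount M i e = activityConvolution M i e := by
  induction hn : M.E.ncard generalizing M i e with
  | zero =>
    exact activityCount_eq_activityConvolution_of_ground_eq_empty
      ((ncard_eq_zero M.ground_finite).1 hn)
  | succ n ih =>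
    obtain ⟨g, hgE, hmax⟩ : ∃ g ∈ M.E, ∀ x ∈ M.E, x ≤ g :=
      M.E.exists_max_image id M.ground_finite (nonempty_of_ncard_ne_zero (by omega))
    have hsmaller : (M.E \ {g}).ncard = n := by
      have := ncard_sdiff_singleton_add_one hgE M.ground_finite
      omega
    exact activityCount_eq_activityConvolution_of_minors hmax hgE
      (fun i e ↦ ih (M ＼ {g}) i e hsmaller) (fun i e ↦ ih (M ／ {g}) i e hsmaller)

/-- Coefficientwise convolution formula : counting bases by activities via cyclic flats. -/
theorem stmt13 {α : Type*} [LinearOrder α] (M : Matroid α) [M.Finite] (i e : ℕ) :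
    ({B : Set α | M.IsBase B ∧ (ActInt M B).ncard = i ∧ (ActExt M B).ncard = e}.ncard =
      ∑ᶠ F ∈ {F : Set α | IsCyclicFlat M F},
        {B : Set α | (con M F).IsBase B ∧ (ActInt (con M F) B).ncard = i ∧
            (ActExt (con M F) B).ncard = 0}.ncard *
          {B : Set α | (M ↾ F).IsBase B ∧ (ActInt (M ↾ F) B).ncard = 0 ∧
            (ActExt (M ↾ F) B).ncard = e}.ncard) ∧
    ({B : Set α | M.IsBase B ∧ (ActInt M B).ncard = i ∧ (ActExt M B).ncard = e}.ncard =
      ∑ᶠ F ∈ {F : Set α | F ⊆ M.E},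
        {B : Set α | (con M F).IsBase B ∧ (ActInt (con M F) B).ncard = i ∧
            (ActExt (con M F) B).ncard = 0}.ncard *
          {B : Set α | (M ↾ F).IsBase B ∧ (ActInt (M ↾ F) B).ncard = 0 ∧
            (ActExt (M ↾ F) B).ncard = e}.ncard) ∧
    (∀ F ⊆ M.E, ¬ IsCyclicFlat M F →
      {B : Set α | (con M F).IsBase B ∧ (ActInt (con M F) B).ncard = i ∧
          (ActExt (con M F) B).ncard = 0}.ncard *
        {B : Set α | (M ↾ F).IsBase B ∧ (ActInt (M ↾ F) B).ncard = 0 ∧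
          (ActExt (M ↾ F) B).ncard = e}.ncard = 0) :=
  -- `con M F` is `M ／ F` by definition, so each count above is an `activityCount`.
  ⟨(activityCount_eq_activityConvolution M i e).trans activityConvolution_eq_finsum_isCyclicFlat,
    activityCount_eq_activityConvolution M i e,
    fun _ hF hcyc ↦ activityCount_mul_eq_zero_of_not_isCyclicFlat hF hcyc⟩

end ActiveBij
end

section
/- Let M be a matroid on a finite linearly ordered ground set E and let B be a basis of M with active filtration ∅ = F'_ε ⊂ … ⊂ F'_0 = F_c = F_0 ⊂ … ⊂ F_ι = E. Then the active filtration of the basis E \ B of the dual matroid M* is ∅ = E \ F_ι ⊂ … ⊂ E \ F_0 = E \ F_c = E \ F'_0 ⊂ … ⊂ E \ F'_ε = E, with cyclic flat E \ F_c. -/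
/-! Duality exchanges circuits and cocircuits, so the internal activity of `E \ B` in `M*` is the
external activity of `B` in `M` and vice versa; and `(M(G)/F)* = M*(E \ F)/(E \ G)`. Hence
complementing the terms of the active filtration of `B` and exchanging its two sides turns every
uniactive internal minor into a uniactive external minor of `M*` carrying the complementary base,
and vice versa. -/

open Matroid Set

namespace ActiveBij

section

variable {α : Type*}

lemma sdiff_ssubset_sdiff_of_ssubset {E A C : Set α} (h : A ⊂ C) (hC : C ⊆ E) :
    E \ C ⊂ E \ A := by
  obtain ⟨x, hxC, hxA⟩ := exists_of_ssubset h
  exact ⟨sdiff_subset_sdiff_right h.subset, fun hsub => (hsub ⟨hC hxC, hxA⟩).2 hxC⟩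

lemma sdiff_inter_eq_sdiff_inter_of_subset {E B D : Set α} (hD : D ⊆ E) :
    (E \ B) ∩ D = D \ (B ∩ D) := by
  ext x
  have := @hD x
  simp only [mem_inter_iff, mem_sdiff]
  tauto

lemma minor_eq_restrict_contract (M : Matroid α) (G F : Set α) : minor M G F = (M ↾ G) ／ F := rfl

lemma minor_dual {M : Matroid α} {F G : Set α} (hFG : F ⊆ G) (hG : G ⊆ M.E) :
    (minor M G F)✶ = minor M✶ (M.E \ F) (M.E \ G) := by
  have hdisj : Disjoint F (M.E \ G) := disjoint_sdiff_right.mono_left hFG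
  rw [minor_eq_restrict_contract, minor_eq_restrict_contract, ← delete_compl hG,
    ← contract_delete_comm _ hdisj, dual_contract_delete]
  rfl

lemma cocct_dual_iff {M : Matroid α} {C : Set α} : Cocct M✶ C ↔ Cct M C := by
  rw [Cocct, dual_dual]

lemma fundCct_dual_compl (M : Matroid α) (B : Set α) (e : α) :
    fundCct M✶ (M.E \ B) e = fundCocct M B e := rfl

lemma fundCocct_dual_compl {M : Matroid α} {B : Set α} (hB : B ⊆ M.E) (b : α) :
    fundCocct M✶ (M.E \ B) b = fundCct M B b := by
  simp only [fundCocct, fundCct, cocct_dual_iff, dual_ground, sdiff_sdiff_cancel_left hB]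

section Activity

variable [LinearOrder α] {M : Matroid α} {B : Set α}

lemma actInt_dual_compl (hB : B ⊆ M.E) : ActInt M✶ (M.E \ B) = ActExt M B := by
  ext x
  simp only [ActInt, ActExt, mem_ofPred_eq, fundCocct_dual_compl hB]

lemma actExt_dual_compl (hB : B ⊆ M.E) : ActExt M✶ (M.E \ B) = ActInt M B := by
  ext x
  simp only [ActInt, ActExt, mem_ofPred_eq, fundCct_dual_compl, dual_ground,
    sdiff_sdiff_cancel_left hB]

lemma UIntBase.compl_uExtBase_dual (h : UIntBase M B) : UExtBase M✶ (M.E \ B) := by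
  obtain ⟨hB, hInt, hExt⟩ := h
  exact ⟨hB.compl_isBase_dual, by rwa [actInt_dual_compl hB.subset_ground],
    by rwa [actExt_dual_compl hB.subset_ground]⟩

lemma UExtBase.compl_uIntBase_dual (h : UExtBase M B) : UIntBase M✶ (M.E \ B) := by
  obtain ⟨hB, hInt, hExt⟩ := h
  exact ⟨hB.compl_isBase_dual, by rwa [actInt_dual_compl hB.subset_ground],
    by rwa [actExt_dual_compl hB.subset_ground]⟩

lemma UIntBase.inter_compl_uExtBase_dual {N : Matroid α} {E : Set α} (hN : N.E ⊆ E)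
    (h : UIntBase N (B ∩ N.E)) : UExtBase N✶ ((E \ B) ∩ N.E) := by
  rw [sdiff_inter_eq_sdiff_inter_of_subset hN]
  exact h.compl_uExtBase_dual

lemma UExtBase.inter_compl_uIntBase_dual {N : Matroid α} {E : Set α} (hN : N.E ⊆ E)
    (h : UExtBase N (B ∩ N.E)) : UIntBase N✶ ((E \ B) ∩ N.E) := by
  rw [sdiff_inter_eq_sdiff_inter_of_subset hN]
  exact h.compl_uIntBase_dual

end Activity

namespace IsFiltration

variable [LinearOrder α] {M : Matroid α} {f : Filtration α}

lemma F_subset_ground_s15 (h : IsFiltration M f) (k : Fin (f.ι + 1)) : f.F k ⊆ M.E := by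
  obtain ⟨-, -, htop, hF, -⟩ := h
  exact htop ▸ (Fin.strictMono_iff_lt_succ.mpr hF).monotone (Fin.le_last k)

lemma F'_subset_ground_s15 (h : IsFiltration M f) (k : Fin (f.ε + 1)) : f.F' k ⊆ M.E :=
  (Fin.strictAnti_iff_succ_lt.mpr h.2.2.2.2.1).antitone (Fin.zero_le k) |>.trans
    (h.2.1 ▸ h.F_subset_ground_s15 0)

lemma dualFil_F_succ_sdiff (h : IsFiltration M f) (k : Fin (dualFil M f).ι) :
    (dualFil M f).F k.succ \ (dualFil M f).F k.castSucc = f.F' k.castSucc \ f.F' k.succ :=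
  sdiff_sdiff_sdiff_cancel_left (h.F'_subset_ground_s15 _)

lemma dualFil_F'_castSucc_sdiff (h : IsFiltration M f) (k : Fin (dualFil M f).ε) :
    (dualFil M f).F' k.castSucc \ (dualFil M f).F' k.succ = f.F k.succ \ f.F k.castSucc :=
  sdiff_sdiff_sdiff_cancel_left (h.F_subset_ground_s15 _)

lemma dual (h : IsFiltration M f) : IsFiltration M✶ (dualFil M f) := by
  have hFE := h.F_subset_ground_s15
  have hF'E := h.F'_subset_ground_s15
  have hFdiff := h.dualFil_F'_castSucc_sdiff
  have hF'diff := h.dualFil_F_succ_sdiff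
  obtain ⟨hbot, hmid, htop, hF, hF', hFmin, hF'min⟩ := h
  refine ⟨?_, ?_, ?_, ?_, ?_, ?_, ?_⟩
  · exact (congrArg (M.E \ ·) htop).trans Set.sdiff_self
  · exact congrArg (M.E \ ·) hmid.symm
  · exact (congrArg (M.E \ ·) hbot).trans sdiff_empty
  · exact fun k => sdiff_ssubset_sdiff_of_ssubset (hF' k) (hF'E _)
  · exact fun k => sdiff_ssubset_sdiff_of_ssubset (hF k) (hFE _)
  · intro j k hjk a b ha hb
    rw [hF'diff] at ha hb
    exact hF'min j k hjk a b ha hb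
  · intro j k hjk a b ha hb
    rw [hFdiff] at ha hb
    exact hFmin j k hjk a b ha hb

lemma intMinor_dualFil (h : IsFiltration M f) (k : Fin (dualFil M f).ι) :
    intMinor M✶ (dualFil M f) k = (extMinor M f k)✶ :=
  (minor_dual (h.2.2.2.2.1 k).subset (h.F'_subset_ground_s15 _)).symm

lemma extMinor_dualFil (h : IsFiltration M f) (k : Fin (dualFil M f).ε) :
    extMinor M✶ (dualFil M f) k = (intMinor M f k)✶ :=
  (minor_dual (h.2.2.2.1 k).subset (h.F_subset_ground_s15 _)).symm

end IsFiltration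

end

theorem stmt15_general {α : Type*} [LinearOrder α] (M : Matroid α)
    (B : Set α) (f : Filtration α)
    (hf : IsActiveFiltration M B f) :
    IsActiveFiltration M✶ (M.E \ B) (dualFil M f) ∧
    (dualFil M f).F 0 = M.E \ f.F 0 := by
  obtain ⟨hfil, hint, hext⟩ := hf
  refine ⟨⟨hfil.dual, fun k => ?_, fun k => ?_⟩, congrArg (M.E \ ·) hfil.2.1⟩
  · rw [hfil.intMinor_dualFil, hfil.dualFil_F_succ_sdiff]
    exact (hext k).inter_compl_uIntBase_dual (sdiff_subset.trans (hfil.F'_subset_ground_s15 _))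
  · rw [hfil.extMinor_dualFil, hfil.dualFil_F'_castSucc_sdiff]
    exact (hint k).inter_compl_uExtBase_dual (sdiff_subset.trans (hfil.F_subset_ground_s15 _))

/-- The active filtration of the base `E \ B` of the dual matroid is the dual of the
active filtration of `B`, with complementary cyclic flat. -/
theorem stmt15 {α : Type*} [LinearOrder α] (M : Matroid α) [M.Finite]
    (B : Set α) (hB : M.IsBase B) (f : Filtration α)
    (hf : IsActiveFiltration M B f) :
    IsActiveFiltration M✶ (M.E \ B) (dualFil M f) ∧
    (dualFil M f).F 0 = M.E \ f.F 0 :=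
  stmt15_general M B f hf

end ActiveBij
end
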